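/- Let ε ≥ 0, and let (V_k) and (Ṽ_k) be sequences with arbitrary initial vectors V_0, Ṽ_0 satisfying V_{k+1} = T V_k and Ṽ_{k+1} = T Ṽ_k + w̃_k with ‖w̃_k‖∞ ≤ ε for all k. Then limsup_{k→∞} ‖V_k − Ṽ_k‖∞ ≤ ε/(1−γ). -/

import Mathlib

open Finset Filter

noncomputable def supNorm {S : Type*} [Fintype S] [Nonempty S] (V : S → ℝ) : ℝ :=
  Finset.univ.sup' Finset.univ_nonempty fun s => |V s|

noncomputable def bellmanT {S A : Type*} [Fintype S] [Fintype A] [Nonempty A]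
    (P R : S → A → S → ℝ) (γ : ℝ) (V : S → ℝ) : S → ℝ :=
  fun s => Finset.univ.sup' Finset.univ_nonempty
    fun a => ∑ s', P s a s' * (R s a s' + γ * V s')

/-! The Bellman operator is a `γ`-contraction for the sup norm, so the error
`e k = ‖V k - Ṽ k‖` obeys `e (k + 1) ≤ γ * e k + ε`; iterating, `e k` approaches the fixed point
`ε / (1 - γ)` of `x ↦ γ * x + ε` geometrically fast. -/

theorem supNorm_eq_norm {S : Type*} [Fintype S] [Nonempty S] (V : S → ℝ) :
    supNorm V = ‖V‖ := by
  refine le_antisymm (Finset.sup'_le _ _ fun s _ => norm_le_pi_norm V s) ?_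
  have hs : ∀ s, |V s| ≤ supNorm V := fun s => Finset.le_sup' (fun s => |V s|) (mem_univ s)
  exact (pi_norm_le_iff_of_nonneg ((abs_nonneg _).trans (hs (Classical.arbitrary S)))).2 hs

theorem Finset.abs_sup'_sub_sup'_le {ι : Type*} {s : Finset ι} (hs : s.Nonempty) {f g : ι → ℝ}
    {c : ℝ} (h : ∀ i ∈ s, |f i - g i| ≤ c) : |s.sup' hs f - s.sup' hs g| ≤ c := by
  have hle : ∀ {f g : ι → ℝ}, (∀ i ∈ s, |f i - g i| ≤ c) → s.sup' hs f ≤ s.sup' hs g + c :=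
    fun {f g} h => Finset.sup'_le _ _ fun i hi =>
      calc f i ≤ g i + c := by linarith [le_of_abs_le (h i hi)]
        _ ≤ s.sup' hs g + c := by gcongr; exact Finset.le_sup' g hi
  refine abs_sub_le_iff.2 ⟨by linarith [hle h], ?_⟩
  linarith [hle (f := g) (g := f) fun i hi => abs_sub_comm (g i) (f i) ▸ h i hi]

theorem abs_sum_mul_le_norm {S : Type*} [Fintype S] {p x : S → ℝ} (hp0 : ∀ s, 0 ≤ p s)
    (hp1 : ∑ s, p s = 1) : |∑ s, p s * x s| ≤ ‖x‖ :=
  calc |∑ s, p s * x s| ≤ ∑ s, p s * |x s| := by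
        refine (abs_sum_le_sum_abs _ _).trans_eq (sum_congr rfl fun s _ => ?_)
        rw [abs_mul, abs_of_nonneg (hp0 s)]
    _ ≤ ∑ s, p s * ‖x‖ := by gcongr with s; exacts [hp0 s, norm_le_pi_norm x s]
    _ = ‖x‖ := by rw [← sum_mul, hp1, one_mul]

theorem norm_bellmanT_sub_le {S A : Type*} [Fintype S] [Fintype A] [Nonempty A]
    {P : S → A → S → ℝ} (hP0 : ∀ s a s', 0 ≤ P s a s') (hP1 : ∀ s a, ∑ s', P s a s' = 1)
    (R : S → A → S → ℝ) {γ : ℝ} (hγ : 0 ≤ γ) (U W : S → ℝ) :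
    ‖bellmanT P R γ U - bellmanT P R γ W‖ ≤ γ * ‖U - W‖ := by
  refine pi_norm_le_iff_of_nonneg (by positivity) |>.2 fun s => ?_
  refine Finset.abs_sup'_sub_sup'_le _ fun a _ => ?_
  have hdiff : ∑ s', P s a s' * (R s a s' + γ * U s') - ∑ s', P s a s' * (R s a s' + γ * W s')
      = γ * ∑ s', P s a s' * (U - W) s' := by
    rw [← sum_sub_distrib, mul_sum]
    exact sum_congr rfl fun s' _ => by simp only [Pi.sub_apply]; ring
  rw [hdiff, abs_mul, abs_of_nonneg hγ]
  exact mul_le_mul_of_nonneg_left (abs_sum_mul_le_norm (hP0 s a) (hP1 s a)) hγ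

theorem sub_le_pow_mul_of_le_mul_add {d : ℕ → ℝ} {γ ε c : ℝ} (hγ : 0 ≤ γ) (hc : γ * c + ε = c)
    (h : ∀ k, d (k + 1) ≤ γ * d k + ε) (k : ℕ) : d k - c ≤ γ ^ k * (d 0 - c) := by
  induction k with
  | zero => simp
  | succ k ih =>
    calc d (k + 1) - c ≤ γ * (d k - c) := by linarith [h k]
      _ ≤ γ * (γ ^ k * (d 0 - c)) := mul_le_mul_of_nonneg_left ih hγ
      _ = γ ^ (k + 1) * (d 0 - c) := by ring

theorem limsup_le_of_le_mul_add {d : ℕ → ℝ} {γ ε : ℝ} (hγ0 : 0 ≤ γ) (hγ1 : γ < 1)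
    (hd : ∀ k, 0 ≤ d k) (h : ∀ k, d (k + 1) ≤ γ * d k + ε) :
    limsup d atTop ≤ ε / (1 - γ) := by
  set c := ε / (1 - γ)
  have hc : γ * c + ε = c := by
    linarith [div_mul_cancel₀ ε (sub_pos.2 hγ1).ne']
  have hlim : Tendsto (fun k => γ ^ k * (d 0 - c) + c) atTop (nhds c) := by
    simpa using ((tendsto_pow_atTop_nhds_zero_of_lt_one hγ0 hγ1).mul_const (d 0 - c)).add_const c
  calc limsup d atTop ≤ limsup (fun k => γ ^ k * (d 0 - c) + c) atTop :=
        limsup_le_limsup (Eventually.of_forall fun k => by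
            linarith [sub_le_pow_mul_of_le_mul_add hγ0 hc h k])
          (isCoboundedUnder_le_of_le atTop hd) hlim.isBoundedUnder_le
    _ = c := hlim.limsup_eq

theorem noisy_vi_limsup_general (n : ℕ) [NeZero n] (A : Type*) [Fintype A] [Nonempty A]
    (P R : Fin n → A → Fin n → ℝ)
    (hP0 : ∀ s a s', 0 ≤ P s a s') (hP1 : ∀ s a, ∑ s', P s a s' = 1)
    (γ : ℝ) (hγ0 : 0 ≤ γ) (hγ1 : γ < 1)
    (ε : ℝ)
    (V Vt : ℕ → Fin n → ℝ) (wt : ℕ → Fin n → ℝ)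
    (hV : ∀ k, V (k + 1) = bellmanT P R γ (V k))
    (hVt : ∀ k, Vt (k + 1) = bellmanT P R γ (Vt k) + wt k)
    (hwt : ∀ k, supNorm (wt k) ≤ ε) :
    Filter.limsup (fun k => supNorm (V k - Vt k)) Filter.atTop ≤ ε / (1 - γ) := by
  simp only [supNorm_eq_norm] at hwt ⊢
  refine limsup_le_of_le_mul_add hγ0 hγ1 (fun k => norm_nonneg _) fun k => ?_
  calc ‖V (k + 1) - Vt (k + 1)‖
      = ‖(bellmanT P R γ (V k) - bellmanT P R γ (Vt k)) - wt k‖ := by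
        rw [hV, hVt, sub_add_eq_sub_sub]
    _ ≤ ‖bellmanT P R γ (V k) - bellmanT P R γ (Vt k)‖ + ‖wt k‖ := norm_sub_le _ _
    _ ≤ γ * ‖V k - Vt k‖ + ε := add_le_add (norm_bellmanT_sub_le hP0 hP1 R hγ0 _ _) (hwt k)

theorem noisy_vi_limsup (n : ℕ) [NeZero n] (A : Type*) [Fintype A] [Nonempty A]
    (P R : Fin n → A → Fin n → ℝ)
    (hP0 : ∀ s a s', 0 ≤ P s a s') (hP1 : ∀ s a, ∑ s', P s a s' = 1)
    (γ : ℝ) (hγ0 : 0 ≤ γ) (hγ1 : γ < 1)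
    (ε : ℝ) (hε : 0 ≤ ε)
    (V Vt : ℕ → Fin n → ℝ) (wt : ℕ → Fin n → ℝ)
    (hV : ∀ k, V (k + 1) = bellmanT P R γ (V k))
    (hVt : ∀ k, Vt (k + 1) = bellmanT P R γ (Vt k) + wt k)
    (hwt : ∀ k, supNorm (wt k) ≤ ε) :
    Filter.limsup (fun k => supNorm (V k - Vt k)) Filter.atTop ≤ ε / (1 - γ) :=
  noisy_vi_limsup_general n A P R hP0 hP1 γ hγ0 hγ1 ε V Vt wt hV hVt hwt
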